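/- Let Γ be a finite connected planar trivalent graph (embedded in ℝ²) with no loops (edges from a vertex to itself), with v vertices, e edges, and f faces including the unbounded face, and let rᵢ be the number of edges on the boundary of the i-th face. If every face boundary count rᵢ is even (Γ is bipartite), then at least two bounded faces of Γ have at most four edges. -/
import Mathlib


/-- Lemma on planar trivalent graphs, part (1), stated via the combinatorics of a face
structure. A finite connected planar trivalent graph with no loops, with `v` vertices, `e`
edges and `f` faces (indexed by `Fin f`, with `i₀` the unbounded face), where `r i` is the
number of edges on the boundary of the `i`-th face, satisfies `∑ r = 2e = 3v`, Euler's
formula `v − e + f = 2`, and every face has at least two boundary edges. If moreover the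
graph is bipartite, i.e. every `r i` is even, then at least two bounded faces have at most
four edges. -/
theorem stmt_6 (v e f : ℕ) (r : Fin f → ℕ) (i₀ : Fin f)
    (hsum : ∑ i, r i = 2 * e) (htri : 2 * e = 3 * v)
    (heuler : v + f = e + 2)
    (hmin : ∀ i, 2 ≤ r i)
    (heven : ∀ i, Even (r i)) :
    ∃ i j : Fin f, i ≠ j ∧ i ≠ i₀ ∧ j ≠ i₀ ∧ r i ≤ 4 ∧ r j ≤ 4 := by
  by_contra hcon
  push_neg at hcon
  -- key identity: ∑ r + 12 = 6 * f
  have hkey : (∑ i, r i) + 12 = 6 * f := by omega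
  have hi₀ : i₀ ∈ (Finset.univ : Finset (Fin f)) := Finset.mem_univ _
  have hsplit0 : ∑ i, r i = r i₀ + ∑ i ∈ Finset.univ.erase i₀, r i :=
    (Finset.add_sum_erase _ _ hi₀).symm
  have hcard0 : (Finset.univ.erase i₀).card = f - 1 := by
    rw [Finset.card_erase_of_mem hi₀]
    simp
  by_cases hj : ∃ j, j ≠ i₀ ∧ r j ≤ 4
  · obtain ⟨j, hjne, hj4⟩ := hj
    have hjmem : j ∈ Finset.univ.erase i₀ := Finset.mem_erase.2 ⟨hjne, Finset.mem_univ _⟩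
    have hsplit1 : ∑ i ∈ Finset.univ.erase i₀, r i
        = r j + ∑ i ∈ (Finset.univ.erase i₀).erase j, r i :=
      (Finset.add_sum_erase _ _ hjmem).symm
    have hcard1 : ((Finset.univ.erase i₀).erase j).card = f - 2 := by
      rw [Finset.card_erase_of_mem hjmem, hcard0]; omega
    have hbig : ∀ k ∈ (Finset.univ.erase i₀).erase j, 6 ≤ r k := by
      intro k hk
      rw [Finset.mem_erase, Finset.mem_erase] at hk
      have h5 : 4 < r k := hcon j k (Ne.symm hk.1) hjne hk.2.1 hj4
      obtain ⟨m, hm⟩ := heven k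
      omega
    have hlow : 6 * (f - 2) ≤ ∑ i ∈ (Finset.univ.erase i₀).erase j, r i := by
      calc 6 * (f - 2) = ((Finset.univ.erase i₀).erase j).card * 6 := by rw [hcard1]; ring
        _ ≤ _ := Finset.card_nsmul_le_sum _ _ _ hbig
    have h2 : 2 ≤ r i₀ := hmin i₀
    have h2' : 2 ≤ r j := hmin j
    have hf2 : 2 ≤ f := by
      have := Fin.pos i₀
      by_contra h
      push_neg at h
      interval_cases f
      exact hjne (Subsingleton.elim j i₀)
    omega
  · push_neg at hj
    have hbig : ∀ k ∈ Finset.univ.erase i₀, 6 ≤ r k := by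
      intro k hk
      rw [Finset.mem_erase] at hk
      have h5 : 4 < r k := hj k hk.1
      obtain ⟨m, hm⟩ := heven k
      omega
    have hlow : 6 * (f - 1) ≤ ∑ i ∈ Finset.univ.erase i₀, r i := by
      calc 6 * (f - 1) = (Finset.univ.erase i₀).card * 6 := by rw [hcard0]; ring
        _ ≤ _ := Finset.card_nsmul_le_sum _ _ _ hbig
    have h2 : 2 ≤ r i₀ := hmin i₀
    have hf1 : 1 ≤ f := Fin.pos i₀
    omega
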